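/- Take A = ℂ. Let f = exp(Σ_{i≥1} F_i X^i) and g = exp(Σ_{i≥1} G_i X^i) be elements of 𝒜, and let c_n denote the n-th coefficient of f ⋆ g. Suppose r₁, r₂ > 0 are real numbers such that the sequences (|F_n|·r₁^n)_{n≥1} and (|G_n|·r₂^n)_{n≥1} are bounded. Then for every real r with 0 ≤ r < r₁·r₂, the series Σ_{n≥0} |c_n|·r^n converges; in particular the radius of convergence of f ⋆ g is at least r₁·r₂, so the eñe product of two series with positive radius of convergence has positive radius of convergence. -/

import Mathlib

open PowerSeries

/-- Formal exponential: for `F` with zero constant coefficient this is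
`exp F = ∑ F^k / k!` (each coefficient is a finite sum). -/
noncomputable def pexp {A : Type*} [CommRing A] [Algebra ℚ A] (F : PowerSeries A) :
    PowerSeries A :=
  PowerSeries.mk fun n =>
    ∑ k ∈ Finset.range (n + 1), ((k.factorial : ℚ)⁻¹) • (PowerSeries.coeff n (F ^ k))

/-- Formal logarithm: for `f` with constant coefficient `1` this is
`log f = ∑_{k≥1} (-1)^{k+1} (f-1)^k / k`; it is the inverse bijection of `pexp`
between `X·A[[X]]` and `𝒜 = 1 + X·A[[X]]`. -/
noncomputable def plog {A : Type*} [CommRing A] [Algebra ℚ A] (f : PowerSeries A) :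
    PowerSeries A :=
  PowerSeries.mk fun n =>
    if n = 0 then 0 else
      ∑ k ∈ Finset.range (n + 1), (((-1 : ℚ) ^ (k + 1)) / k) • (PowerSeries.coeff n ((f - 1) ^ k))

/-- The eñe product: if `f = exp (∑_{i≥1} Fᵢ Xⁱ)` and `g = exp (∑_{i≥1} Gᵢ Xⁱ)` then
`f ⋆ g = exp (−∑_{i≥1} i·Fᵢ·Gᵢ·Xⁱ)`. -/
noncomputable def ene {A : Type*} [CommRing A] [Algebra ℚ A] (f g : PowerSeries A) :
    PowerSeries A :=
  pexp (PowerSeries.mk fun i =>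
    -(i : A) * (PowerSeries.coeff i (plog f)) * (PowerSeries.coeff i (plog g)))

open Finset

lemma coeff_pow_mul_eq_zero {R : Type*} [CommRing R] {F : PowerSeries R}
    (hF : constantCoeff F = 0) (g : PowerSeries R) {n k : ℕ} (h : n < k) :
    PowerSeries.coeff n (F ^ k * g) = 0 := by
  have hX : (X : PowerSeries R) ^ k ∣ F ^ k * g :=
    Dvd.dvd.mul_right (pow_dvd_pow_of_dvd (PowerSeries.X_dvd_iff.2 hF) k) g
  exact PowerSeries.X_pow_dvd_iff.1 hX n h

lemma coeff_pow_eq_zero {R : Type*} [CommRing R] {F : PowerSeries R}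
    (hF : constantCoeff F = 0) {n k : ℕ} (h : n < k) :
    PowerSeries.coeff n (F ^ k) = 0 := by
  simpa using coeff_pow_mul_eq_zero hF 1 h

lemma constantCoeff_pexp (F : PowerSeries ℂ) : constantCoeff (pexp F) = 1 := by
  have : (constantCoeff) (pexp F) = PowerSeries.coeff 0 (pexp F) := by
    rw [PowerSeries.coeff_zero_eq_constantCoeff]
  rw [this, pexp, PowerSeries.coeff_mk]
  simp

lemma constantCoeff_plog (f : PowerSeries ℂ) : constantCoeff (plog f) = 0 := by
  have : (constantCoeff) (plog f) = PowerSeries.coeff 0 (plog f) := by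
    rw [PowerSeries.coeff_zero_eq_constantCoeff]
  rw [this, plog, PowerSeries.coeff_mk]
  simp

lemma derivative_pexp (F : PowerSeries ℂ) (hF : constantCoeff F = 0) :
    d⁄dX ℂ (pexp F) = d⁄dX ℂ F * pexp F := by
  ext n
  rw [PowerSeries.coeff_derivative, PowerSeries.coeff_mul]
  have hrhs : ∀ p ∈ antidiagonal n,
      PowerSeries.coeff p.1 (d⁄dX ℂ F) * PowerSeries.coeff p.2 (pexp F)
      = ∑ k ∈ range (n+1), (k.factorial : ℂ)⁻¹ *
          (PowerSeries.coeff p.1 (d⁄dX ℂ F) * PowerSeries.coeff p.2 (F ^ k)) := by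
    intro p hp
    have hp2 : p.2 ≤ n := Finset.HasAntidiagonal.antidiagonal.snd_le hp
    have h2 : PowerSeries.coeff p.2 (pexp F)
        = ∑ k ∈ range (n+1), (k.factorial : ℂ)⁻¹ * PowerSeries.coeff p.2 (F ^ k) := by
      rw [pexp, PowerSeries.coeff_mk]
      rw [Finset.sum_subset (Finset.range_subset_range.2 (Nat.succ_le_succ hp2))]
      · refine Finset.sum_congr rfl fun k _ => ?_
        rw [Rat.smul_def]; push_cast; ring
      · intro k hk1 hk
        rw [Finset.mem_range, not_lt] at hk
        rw [coeff_pow_eq_zero hF (by omega), smul_zero]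
    rw [h2, Finset.mul_sum]
    refine Finset.sum_congr rfl fun k _ => by ring
  rw [Finset.sum_congr rfl hrhs, Finset.sum_comm]
  have hlhs : (∑ k ∈ range (n+1+1), (k.factorial : ℚ)⁻¹ • PowerSeries.coeff (n+1) (F ^ k))
        * ((n:ℂ)+1)
      = ∑ k ∈ range (n+1), ∑ p ∈ antidiagonal n, (k.factorial : ℂ)⁻¹ *
          (PowerSeries.coeff p.1 (d⁄dX ℂ F) * PowerSeries.coeff p.2 (F ^ k)) := by
    rw [Finset.sum_mul, Finset.sum_range_succ']
    have h0 : ((Nat.factorial 0 : ℚ)⁻¹ • PowerSeries.coeff (n+1) (F ^ 0)) * ((n:ℂ)+1) = 0 := by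
      simp
    rw [h0, add_zero]
    refine Finset.sum_congr rfl fun k _ => ?_
    have hd : PowerSeries.coeff (n+1) (F ^ (k+1)) * ((n:ℂ)+1)
        = PowerSeries.coeff n (d⁄dX ℂ (F ^ (k+1))) := by
      rw [PowerSeries.coeff_derivative]
    have hl : d⁄dX ℂ (F ^ (k+1)) = (k+1) • (F ^ k * d⁄dX ℂ F) := by
      rw [Derivation.leibniz_pow]
      simp [smul_eq_mul]
    have hcp : PowerSeries.coeff n (d⁄dX ℂ (F ^ (k+1)))
        = ((k:ℂ)+1) * PowerSeries.coeff n (F ^ k * d⁄dX ℂ F) := by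
      rw [hl, map_nsmul, nsmul_eq_mul]; push_cast; ring
    have hfac : ((k+1).factorial : ℂ)⁻¹ * ((k:ℂ)+1) = (k.factorial : ℂ)⁻¹ := by
      have h1 : ((k:ℂ)+1) ≠ 0 := Nat.cast_add_one_ne_zero k
      have h2 : ((k+1).factorial : ℂ) = ((k:ℂ)+1) * (k.factorial : ℂ) := by
        rw [Nat.factorial_succ]; push_cast; ring
      rw [h2, mul_inv, mul_comm ((k:ℂ)+1)⁻¹, mul_assoc, inv_mul_cancel₀ h1, mul_one]
    calc (((k+1).factorial : ℚ)⁻¹ • PowerSeries.coeff (n+1) (F ^ (k+1))) * ((n:ℂ)+1)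
        = ((k+1).factorial : ℂ)⁻¹ * (PowerSeries.coeff (n+1) (F ^ (k+1)) * ((n:ℂ)+1)) := by
          rw [Rat.smul_def]; push_cast; ring
      _ = ((k+1).factorial : ℂ)⁻¹ * (((k:ℂ)+1) * PowerSeries.coeff n (F ^ k * d⁄dX ℂ F)) := by
          rw [hd, hcp]
      _ = (k.factorial : ℂ)⁻¹ * PowerSeries.coeff n (F ^ k * d⁄dX ℂ F) := by
          rw [← mul_assoc, hfac]
      _ = ∑ p ∈ antidiagonal n, (k.factorial : ℂ)⁻¹ *
            (PowerSeries.coeff p.1 (d⁄dX ℂ F) * PowerSeries.coeff p.2 (F ^ k)) := by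
          rw [mul_comm (F ^ k), PowerSeries.coeff_mul, Finset.mul_sum]
  rw [pexp, PowerSeries.coeff_mk] at *
  exact hlhs

lemma mul_derivative_plog (f : PowerSeries ℂ) (hf : constantCoeff f = 1) :
    f * d⁄dX ℂ (plog f) = d⁄dX ℂ f := by
  set u := f - 1 with hu
  have hu0 : constantCoeff u = 0 := by simp [hu, hf]
  have hdu : d⁄dX ℂ u = d⁄dX ℂ f := by
    rw [hu, map_sub]
    simp
  ext n
  rw [PowerSeries.coeff_mul]
  have key : ∀ j, j ≤ n → PowerSeries.coeff j (d⁄dX ℂ (plog f))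
      = ∑ k ∈ range (n+1), (-1:ℂ)^k * PowerSeries.coeff j (u^k * d⁄dX ℂ f) := by
    intro j hj
    rw [PowerSeries.coeff_derivative, plog, PowerSeries.coeff_mk,
      if_neg (Nat.succ_ne_zero j), Finset.sum_mul, Finset.sum_range_succ']
    have h0 : ((((-1:ℚ)^(0+1))/((0:ℕ):ℚ)) • PowerSeries.coeff (j+1) ((f-1)^0)) * ((j:ℂ)+1) = 0 := by
      norm_num
    rw [h0, add_zero]
    have hterm : ∀ k, ((((-1:ℚ)^(k+1+1))/((k+1:ℕ):ℚ)) • PowerSeries.coeff (j+1) ((f-1)^(k+1))) * ((j:ℂ)+1)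
        = (-1:ℂ)^k * PowerSeries.coeff j (u^k * d⁄dX ℂ f) := by
      intro k
      have h1 : ((k:ℂ)+1) ≠ 0 := Nat.cast_add_one_ne_zero k
      have hd : PowerSeries.coeff (j+1) (u^(k+1)) * ((j:ℂ)+1)
          = PowerSeries.coeff j (d⁄dX ℂ (u^(k+1))) := by
        rw [PowerSeries.coeff_derivative]
      have hl : PowerSeries.coeff j (d⁄dX ℂ (u^(k+1)))
          = ((k:ℂ)+1) * PowerSeries.coeff j (u^k * d⁄dX ℂ f) := by
        rw [Derivation.leibniz_pow, Nat.add_sub_cancel, map_nsmul, nsmul_eq_mul, smul_eq_mul, hdu]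
        push_cast; ring
      calc ((((-1:ℚ)^(k+1+1))/((k+1:ℕ):ℚ)) • PowerSeries.coeff (j+1) ((f-1)^(k+1))) * ((j:ℂ)+1)
          = ((-1:ℂ)^k / ((k:ℂ)+1)) * (PowerSeries.coeff (j+1) (u^(k+1)) * ((j:ℂ)+1)) := by
            rw [Rat.smul_def, ← hu]; push_cast; ring
        _ = ((-1:ℂ)^k / ((k:ℂ)+1)) * (((k:ℂ)+1) * PowerSeries.coeff j (u^k * d⁄dX ℂ f)) := by
            rw [hd, hl]
        _ = (-1:ℂ)^k * PowerSeries.coeff j (u^k * d⁄dX ℂ f) := by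
            field_simp
    rw [Finset.sum_congr rfl (fun k _ => hterm k)]
    apply Finset.sum_subset (Finset.range_subset_range.2 (Nat.succ_le_succ hj))
    intro k hk1 hk
    rw [Finset.mem_range, not_lt] at hk
    rw [coeff_pow_mul_eq_zero hu0 _ (by omega), mul_zero]
  have step1 : ∑ p ∈ antidiagonal n,
      PowerSeries.coeff p.1 f * PowerSeries.coeff p.2 (d⁄dX ℂ (plog f))
      = ∑ k ∈ range (n+1), (-1:ℂ)^k * PowerSeries.coeff n (f * (u^k * d⁄dX ℂ f)) := by
    have : ∀ p ∈ antidiagonal n,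
        PowerSeries.coeff p.1 f * PowerSeries.coeff p.2 (d⁄dX ℂ (plog f))
        = ∑ k ∈ range (n+1), (-1:ℂ)^k *
            (PowerSeries.coeff p.1 f * PowerSeries.coeff p.2 (u^k * d⁄dX ℂ f)) := by
      intro p hp
      rw [key p.2 (Finset.HasAntidiagonal.antidiagonal.snd_le hp), Finset.mul_sum]
      exact Finset.sum_congr rfl fun k _ => by ring
    rw [Finset.sum_congr rfl this, Finset.sum_comm]
    exact Finset.sum_congr rfl fun k _ => by rw [PowerSeries.coeff_mul, Finset.mul_sum]
  rw [step1]
  have hfm : ∀ k, f * (u^k * d⁄dX ℂ f) = u^k * d⁄dX ℂ f + u^(k+1) * d⁄dX ℂ f := by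
    intro k
    have hfe : f = 1 + u := by rw [hu]; ring
    rw [hfe]; ring
  have htel : ∀ k, (-1:ℂ)^k * PowerSeries.coeff n (f * (u^k * d⁄dX ℂ f))
      = (fun k => (-1:ℂ)^k * PowerSeries.coeff n (u^k * d⁄dX ℂ f)) k
        - (fun k => (-1:ℂ)^k * PowerSeries.coeff n (u^k * d⁄dX ℂ f)) (k+1) := by
    intro k
    simp only [hfm k, map_add]
    ring
  rw [Finset.sum_congr rfl (fun k _ => htel k), Finset.sum_range_sub']
  simp only [pow_zero, one_mul]
  rw [coeff_pow_mul_eq_zero hu0 _ (Nat.lt_succ_self n), mul_zero, sub_zero]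

lemma plog_pexp (F : PowerSeries ℂ) (hF : constantCoeff F = 0) : plog (pexp F) = F := by
  have h1 : constantCoeff (pexp F) = 1 := constantCoeff_pexp F
  have hne : pexp F ≠ 0 := fun h => by simp [h] at h1
  apply PowerSeries.derivative.ext
  · have h2 := mul_derivative_plog (pexp F) h1
    rw [derivative_pexp F hF] at h2
    apply mul_left_cancel₀ hne
    rw [h2, mul_comm]
  · rw [constantCoeff_plog, hF]

lemma ene_pexp_eq (F G : ℕ → ℂ) (hF0 : F 0 = 0) (hG0 : G 0 = 0) :
    ene (pexp (PowerSeries.mk F)) (pexp (PowerSeries.mk G))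
      = pexp (PowerSeries.mk fun i => -(i:ℂ) * F i * G i) := by
  unfold ene
  rw [plog_pexp _ (by rw [constantCoeff_mk]; exact hF0),
    plog_pexp _ (by rw [constantCoeff_mk]; exact hG0)]
  ext i
  simp [PowerSeries.coeff_mk]

lemma coeff_pow_nonneg {Q : PowerSeries ℝ} (hQ : ∀ n, 0 ≤ PowerSeries.coeff n Q) (k n : ℕ) :
    0 ≤ PowerSeries.coeff n (Q^k) := by
  induction k generalizing n with
  | zero =>
    rw [pow_zero, PowerSeries.coeff_one]
    split_ifs <;> norm_num
  | succ k ih =>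
    rw [pow_succ, PowerSeries.coeff_mul]
    exact Finset.sum_nonneg fun p _ => mul_nonneg (ih p.1) (hQ p.2)

lemma abs_coeff_pow_le (H : ℕ → ℂ) (r : ℝ) (hr : 0 ≤ r) (k n : ℕ) :
    ‖PowerSeries.coeff n ((PowerSeries.mk H)^k)‖ * r^n
      ≤ PowerSeries.coeff n ((PowerSeries.mk fun i => ‖H i‖ * r^i)^k) := by
  induction k generalizing n with
  | zero =>
    rw [pow_zero, pow_zero, PowerSeries.coeff_one, PowerSeries.coeff_one]
    split_ifs with h
    · subst h; simp
    · simp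
  | succ k ih =>
    rw [pow_succ, pow_succ, PowerSeries.coeff_mul, PowerSeries.coeff_mul]
    calc ‖∑ p ∈ antidiagonal n,
            PowerSeries.coeff p.1 ((PowerSeries.mk H)^k) * PowerSeries.coeff p.2 (PowerSeries.mk H)‖ * r^n
        ≤ (∑ p ∈ antidiagonal n,
            ‖PowerSeries.coeff p.1 ((PowerSeries.mk H)^k)‖ * ‖PowerSeries.coeff p.2 (PowerSeries.mk H)‖) * r^n := by
          refine mul_le_mul_of_nonneg_right ?_ (pow_nonneg hr n)
          refine le_trans (norm_sum_le _ _) ?_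
          exact le_of_eq (Finset.sum_congr rfl fun p _ => norm_mul _ _)
      _ = ∑ p ∈ antidiagonal n,
            (‖PowerSeries.coeff p.1 ((PowerSeries.mk H)^k)‖ * r^p.1) *
            (‖PowerSeries.coeff p.2 (PowerSeries.mk H)‖ * r^p.2) := by
          rw [Finset.sum_mul]
          refine Finset.sum_congr rfl fun p hp => ?_
          rw [Finset.HasAntidiagonal.mem_antidiagonal] at hp
          rw [← hp, pow_add]
          ring
      _ ≤ ∑ p ∈ antidiagonal n,
            PowerSeries.coeff p.1 ((PowerSeries.mk fun i => ‖H i‖ * r^i)^k) *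
            (‖H p.2‖ * r^p.2) := by
          refine Finset.sum_le_sum fun p _ => ?_
          rw [PowerSeries.coeff_mk]
          refine mul_le_mul_of_nonneg_right (ih p.1) ?_
          positivity
      _ = ∑ p ∈ antidiagonal n,
            PowerSeries.coeff p.1 ((PowerSeries.mk fun i => ‖H i‖ * r^i)^k) *
            PowerSeries.coeff p.2 (PowerSeries.mk fun i => ‖H i‖ * r^i) :=
          Finset.sum_congr rfl fun p _ => by rw [PowerSeries.coeff_mk]

lemma sum_coeff_pow_le (Q : PowerSeries ℝ) (hQ : ∀ n, 0 ≤ PowerSeries.coeff n Q) (S : ℝ)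
    (hS : 0 ≤ S) (hb : ∀ N, ∑ n ∈ range N, PowerSeries.coeff n Q ≤ S) (k N : ℕ) :
    ∑ n ∈ range N, PowerSeries.coeff n (Q^k) ≤ S^k := by
  induction k with
  | zero =>
    simp only [pow_zero, PowerSeries.coeff_one]
    rw [Finset.sum_ite_eq' (range N) 0 (fun _ => (1:ℝ))]
    split_ifs <;> norm_num
  | succ k ih =>
    have hdisj : (↑(range N) : Set ℕ).PairwiseDisjoint (fun n => antidiagonal n) := by
      intro a _ b _ hab
      simp only [Function.onFun]
      rw [Finset.disjoint_left]
      intro p hpa hpb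
      rw [Finset.HasAntidiagonal.mem_antidiagonal] at hpa hpb
      exact hab (hpa ▸ hpb)
    have hsub : (range N).biUnion (fun n => antidiagonal n) ⊆ range N ×ˢ range N := by
      intro p hp
      rw [Finset.mem_biUnion] at hp
      obtain ⟨n, hn, hpn⟩ := hp
      rw [Finset.mem_range] at hn
      rw [Finset.HasAntidiagonal.mem_antidiagonal] at hpn
      rw [Finset.mem_product, Finset.mem_range, Finset.mem_range]
      omega
    calc ∑ n ∈ range N, PowerSeries.coeff n (Q^(k+1))
        = ∑ p ∈ (range N).biUnion (fun n => antidiagonal n),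
            PowerSeries.coeff p.1 (Q^k) * PowerSeries.coeff p.2 Q := by
          rw [Finset.sum_biUnion hdisj]
          exact Finset.sum_congr rfl fun n _ => by rw [pow_succ, PowerSeries.coeff_mul]
      _ ≤ ∑ p ∈ range N ×ˢ range N, PowerSeries.coeff p.1 (Q^k) * PowerSeries.coeff p.2 Q := by
          refine Finset.sum_le_sum_of_subset_of_nonneg hsub fun p _ _ => ?_
          exact mul_nonneg (coeff_pow_nonneg hQ k p.1) (hQ p.2)
      _ = (∑ n ∈ range N, PowerSeries.coeff n (Q^k)) * (∑ n ∈ range N, PowerSeries.coeff n Q) := by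
          rw [Finset.sum_product, Finset.sum_mul]
          exact Finset.sum_congr rfl fun i _ => by rw [Finset.mul_sum]
      _ ≤ S^k * S := by
          refine mul_le_mul ih (hb N) (Finset.sum_nonneg fun n _ => hQ n) (pow_nonneg hS k)
      _ = S^(k+1) := by rw [pow_succ]


/-- **Analytic property of the eñe product over ℂ**: if
`f = exp(∑_{i≥1} Fᵢ Xⁱ)`, `g = exp(∑_{i≥1} Gᵢ Xⁱ) ∈ 𝒜` and `r₁, r₂ > 0` are such
that `(|Fₙ|·r₁ⁿ)` and `(|Gₙ|·r₂ⁿ)` are bounded sequences, then for every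
`0 ≤ r < r₁·r₂` the series `∑ |cₙ|·rⁿ` converges, where `cₙ` is the `n`-th
coefficient of `f ⋆ g`; hence the radius of convergence of `f ⋆ g` is at least
`r₁·r₂`, and the eñe product of two series with positive radius of convergence
has positive radius of convergence. -/
theorem ene_radius_of_convergence (F G : ℕ → ℂ) (hF0 : F 0 = 0) (hG0 : G 0 = 0)
    (r₁ r₂ : ℝ) (hr₁ : 0 < r₁) (hr₂ : 0 < r₂)
    (hF : ∃ C : ℝ, ∀ n : ℕ, ‖F n‖ * r₁ ^ n ≤ C)
    (hG : ∃ C : ℝ, ∀ n : ℕ, ‖G n‖ * r₂ ^ n ≤ C) :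
    ∀ r : ℝ, 0 ≤ r → r < r₁ * r₂ →
      Summable fun n : ℕ =>
        ‖PowerSeries.coeff n
          (ene (pexp (PowerSeries.mk F)) (pexp (PowerSeries.mk G)))‖ * r ^ n := by
  intro r hr0 hrlt
  obtain ⟨C₁, hC₁⟩ := hF
  obtain ⟨C₂, hC₂⟩ := hG
  have hC₁0 : 0 ≤ C₁ := le_trans (by positivity) (hC₁ 0)
  have hC₂0 : 0 ≤ C₂ := le_trans (by positivity) (hC₂ 0)
  rw [ene_pexp_eq F G hF0 hG0]
  set H : ℕ → ℂ := fun i => -(i:ℂ) * F i * G i with hH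
  set a : ℕ → ℝ := fun n => ‖H n‖ * r^n with ha
  have ha0 : ∀ n, 0 ≤ a n := fun n => by rw [ha]; positivity
  have haz : a 0 = 0 := by simp [ha, hH]
  set t : ℝ := r / (r₁ * r₂) with ht
  have ht0 : 0 ≤ t := div_nonneg hr0 (by positivity)
  have ht1 : t < 1 := (div_lt_one (by positivity)).2 hrlt
  have ha_le : ∀ n, a n ≤ (C₁*C₂) * ((n:ℝ) * t^n) := by
    intro n
    have habsH : ‖H n‖ = (n:ℝ) * (‖F n‖ * ‖G n‖) := by
      rw [hH]
      simp only [norm_mul, norm_neg, Complex.norm_natCast]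
      ring
    have key : (‖F n‖ * r₁^n) * (‖G n‖ * r₂^n) ≤ C₁ * C₂ :=
      mul_le_mul (hC₁ n) (hC₂ n) (by positivity) hC₁0
    have heq : a n = (n:ℝ) * ((‖F n‖ * r₁^n) * (‖G n‖ * r₂^n)) * t^n := by
      rw [ha]
      simp only [habsH, ht, div_pow]
      field_simp
      ring
    rw [heq]
    have h3 : (n:ℝ) * ((‖F n‖ * r₁^n) * (‖G n‖ * r₂^n)) * t^n
        ≤ (n:ℝ) * (C₁*C₂) * t^n := by
      refine mul_le_mul_of_nonneg_right (mul_le_mul_of_nonneg_left key (Nat.cast_nonneg n)) (pow_nonneg ht0 n)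
    calc (n:ℝ) * ((‖F n‖ * r₁^n) * (‖G n‖ * r₂^n)) * t^n
        ≤ (n:ℝ) * (C₁*C₂) * t^n := h3
      _ = (C₁*C₂) * ((n:ℝ) * t^n) := by ring
  have hsum_a : Summable a := by
    refine Summable.of_nonneg_of_le ha0 ha_le ?_
    have h := (summable_pow_mul_geometric_of_norm_lt_one 1
      (by rwa [Real.norm_eq_abs, abs_of_nonneg ht0] : ‖t‖ < 1)).mul_left (C₁*C₂)
    simpa [pow_one] using h
  set S := ∑' n, a n with hSdef
  have hS0 : 0 ≤ S := tsum_nonneg ha0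
  have hb : ∀ N, ∑ n ∈ range N, a n ≤ S := fun N => Summable.sum_le_tsum (range N) (fun n _ => ha0 n) hsum_a
  set Q : PowerSeries ℝ := PowerSeries.mk a with hQdef
  have hQc : ∀ n, PowerSeries.coeff n Q = a n := fun n => PowerSeries.coeff_mk n a
  have hQnn : ∀ n, 0 ≤ PowerSeries.coeff n Q := fun n => (hQc n) ▸ ha0 n
  have hQ0 : constantCoeff Q = 0 := by rw [hQdef, PowerSeries.constantCoeff_mk]; exact haz
  have hbQ : ∀ N, ∑ n ∈ range N, PowerSeries.coeff n Q ≤ S := by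
    intro N; simp only [hQc]; exact hb N
  have hd : ∀ n, ‖PowerSeries.coeff n (pexp (PowerSeries.mk H))‖ * r^n
      ≤ PowerSeries.coeff n (pexp Q) := by
    intro n
    rw [pexp, PowerSeries.coeff_mk, pexp, PowerSeries.coeff_mk]
    have hcast : ∀ k : ℕ, (((k.factorial:ℚ)⁻¹ : ℚ) : ℂ) = ((k.factorial : ℂ))⁻¹ := by
      intro k; push_cast; ring
    calc ‖∑ k ∈ range (n+1), ((k.factorial:ℚ)⁻¹) • PowerSeries.coeff n ((PowerSeries.mk H)^k)‖ * r^n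
        ≤ (∑ k ∈ range (n+1), (k.factorial:ℝ)⁻¹ * ‖PowerSeries.coeff n ((PowerSeries.mk H)^k)‖) * r^n := by
          refine mul_le_mul_of_nonneg_right ?_ (pow_nonneg hr0 n)
          refine le_trans (norm_sum_le _ _) (le_of_eq (Finset.sum_congr rfl fun k _ => ?_))
          rw [Rat.smul_def, norm_mul, hcast, norm_inv, Complex.norm_natCast]
      _ = ∑ k ∈ range (n+1), (k.factorial:ℝ)⁻¹ * (‖PowerSeries.coeff n ((PowerSeries.mk H)^k)‖ * r^n) := by
          rw [Finset.sum_mul]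
          exact Finset.sum_congr rfl fun k _ => by ring
      _ ≤ ∑ k ∈ range (n+1), (k.factorial:ℝ)⁻¹ * PowerSeries.coeff n (Q^k) := by
          refine Finset.sum_le_sum fun k _ => mul_le_mul_of_nonneg_left ?_ (by positivity)
          have h := abs_coeff_pow_le H r hr0 k n
          rw [hQdef, ha]
          exact h
      _ = ∑ k ∈ range (n+1), ((k.factorial:ℚ)⁻¹) • PowerSeries.coeff n (Q^k) := by
          refine Finset.sum_congr rfl fun k _ => ?_
          rw [Rat.smul_def]
          push_cast
          ring
  have hdn : ∀ N, ∑ n ∈ range N, PowerSeries.coeff n (pexp Q) ≤ ∑' k : ℕ, S^k / k.factorial := by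
    intro N
    have h1 : ∀ n ∈ range N, PowerSeries.coeff n (pexp Q)
        = ∑ k ∈ range N, (k.factorial:ℝ)⁻¹ * PowerSeries.coeff n (Q^k) := by
      intro n hn
      rw [Finset.mem_range] at hn
      rw [pexp, PowerSeries.coeff_mk]
      rw [Finset.sum_subset (Finset.range_subset_range.2 hn)]
      · exact Finset.sum_congr rfl fun k _ => by rw [Rat.smul_def]; push_cast; ring
      · intro k hk1 hk
        rw [Finset.mem_range, not_lt] at hk
        rw [coeff_pow_eq_zero hQ0 (by omega), smul_zero]
    rw [Finset.sum_congr rfl h1, Finset.sum_comm]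
    calc ∑ k ∈ range N, ∑ n ∈ range N, (k.factorial:ℝ)⁻¹ * PowerSeries.coeff n (Q^k)
        = ∑ k ∈ range N, (k.factorial:ℝ)⁻¹ * ∑ n ∈ range N, PowerSeries.coeff n (Q^k) := by
          exact Finset.sum_congr rfl fun k _ => by rw [Finset.mul_sum]
      _ ≤ ∑ k ∈ range N, (k.factorial:ℝ)⁻¹ * S^k := by
          refine Finset.sum_le_sum fun k _ =>
            mul_le_mul_of_nonneg_left (sum_coeff_pow_le Q hQnn S hS0 hbQ k N) (by positivity)
      _ = ∑ k ∈ range N, S^k / k.factorial :=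
          Finset.sum_congr rfl fun k _ => by rw [inv_mul_eq_div]
      _ ≤ ∑' k : ℕ, S^k / k.factorial :=
          Summable.sum_le_tsum (range N) (fun k _ => by positivity) (Real.summable_pow_div_factorial S)
  have hsum_d : Summable (fun n => PowerSeries.coeff n (pexp Q)) := by
    refine summable_of_sum_range_le (fun n => ?_) hdn
    rw [pexp, PowerSeries.coeff_mk]
    refine Finset.sum_nonneg fun k _ => ?_
    rw [Rat.smul_def, Rat.cast_inv, Rat.cast_natCast]
    exact mul_nonneg (by positivity) (coeff_pow_nonneg hQnn k n)
  exact Summable.of_nonneg_of_le (fun n => by positivity) hd hsum_d
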